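/- Let n ≥ 1, ℓ = n, let H: R^{2n} → R satisfy (H0)–(H2), and let M > M*. Define the vector field ξ on R^{2n}_* := R^{2n} \ ({0}×R^ℓ) by ξ(p,q) := (p,0). Then ξ is a symplectic dilation of H^{-1}(M): (a) ⟨J·Dξ(x)u, v⟩ + ⟨Ju, Dξ(x)v⟩ = ⟨Ju, v⟩ for all x ∈ R^{2n}_* and u,v ∈ R^{2n} (the coordinate expression of L_ξω = ω for the standard symplectic form), and (b) ∇H(x)·ξ(x) > 0 for every x ∈ H^{-1}(M), so ξ is transverse to H^{-1}(M). In particular H^{-1}(M) is of contact type. -/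

import Mathlib

noncomputable section
open scoped RealInnerProductSpace

/-- `ℝ^{2n}` as a Euclidean space. -/
abbrev E2 (n : ℕ) := EuclideanSpace ℝ (Fin (2*n))

/-- The standard symplectic matrix `J` on `ℝ^{2n} = ℝ^n × ℝ^n`, `J(u,v) = (-v,u)`. -/
def Jsymp (n : ℕ) (x : E2 n) : E2 n :=
  WithLp.toLp 2 fun (i : Fin (2*n)) => if h : (i : ℕ) < n then -x ⟨(i : ℕ) + n, by omega⟩
           else x ⟨(i : ℕ) - n, by have := i.isLt; omega⟩

/-- The vector `(0,m) ∈ ℝ^{2n-ℓ} × ℝ^ℓ` whose `q`-part (last `ℓ` coordinates) is the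
integer vector `m ∈ ℤ^ℓ` and whose `p`-part vanishes. -/
def qVec (n l : ℕ) (m : Fin l → ℤ) : E2 n :=
  WithLp.toLp 2 fun (i : Fin (2*n)) => if h : 2*n - l ≤ (i : ℕ) then
      (m ⟨(i : ℕ) - (2*n - l), by have := i.isLt; omega⟩ : ℝ) else 0

/-- The vector `(p,0)`: projection of `x = (p,q)` onto the first `2n-ℓ` coordinates. -/
def projP (n l : ℕ) (x : E2 n) : E2 n := WithLp.toLp 2 fun (i : Fin (2*n)) => if (i : ℕ) < 2*n - l then x i else 0

/-- `|p|` : the Euclidean norm of the first `2n-ℓ` coordinates of `x = (p,q)`. -/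
def pnorm (n l : ℕ) (x : E2 n) : ℝ := ‖projP n l x‖

/-! Since `ξ(p,q) = (p,0)` is linear, its derivative is `ξ` itself, and `L_ξω = ω` reduces to the
coordinate identity `ω(Pu, v) + ω(u, Pv) = ω(u, v)` for the projection `P` onto the `p`-plane,
which holds because `ω` pairs the `p`-coordinates only with the `q`-coordinates. Transversality is
(H2): on `H⁻¹(M)` one has `|p| > r` because `H < M` on `{|p| ≤ r}`, so
`∇H · ξ ≥ μH = μM > 0`. -/

def projPCLM (n l : ℕ) : E2 n →L[ℝ] E2 n :=
  LinearMap.toContinuousLinearMap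
  { toFun := projP n l
    map_add' := fun x y => by
      ext i
      by_cases h : (i : ℕ) < 2*n - l <;> simp [projP, h]
    map_smul' := fun c x => by
      ext i
      by_cases h : (i : ℕ) < 2*n - l <;> simp [projP, h] }

@[simp]
lemma coe_projPCLM (n l : ℕ) : ⇑(projPCLM n l) = projP n l := rfl

lemma fderiv_projP (n l : ℕ) (x : E2 n) : fderiv ℝ (projP n l) x = projPCLM n l :=
  (projPCLM n l).fderiv

lemma contDiff_projP (n l : ℕ) {k : WithTop ℕ∞} : ContDiff ℝ k (projP n l) :=
  (projPCLM n l).contDiff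

lemma continuous_pnorm (n l : ℕ) : Continuous (pnorm n l) :=
  (projPCLM n l).continuous.norm

lemma inner_Jsymp_projP_add_inner_Jsymp_projP (n : ℕ) (u v : E2 n) :
    ⟪Jsymp n (projP n n u), v⟫ + ⟪Jsymp n u, projP n n v⟫ = ⟪Jsymp n u, v⟫ := by
  simp only [PiLp.inner_apply, RCLike.inner_apply, conj_trivial, ← Finset.sum_add_distrib]
  refine Finset.sum_congr rfl fun i _ => ?_
  have hi := i.isLt
  rcases lt_or_ge (i : ℕ) n with h | h
  · have hq : ¬ ((i : ℕ) + n < 2*n - n) := by omega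
    have hp : (i : ℕ) < 2*n - n := by omega
    simp only [Jsymp, projP, PiLp.toLp_apply, dif_pos h, if_pos hp, if_neg hq]
    ring
  · have hp : (i : ℕ) - n < 2*n - n := by omega
    have hq : ¬ ((i : ℕ) < 2*n - n) := by omega
    simp only [Jsymp, projP, PiLp.toLp_apply, dif_neg (not_lt.mpr h), if_pos hp, if_neg hq]
    ring

lemma lt_pnorm_of_le_apply {n l : ℕ} {H : E2 n → ℝ} {r M : ℝ}
    (hM : ∀ x : E2 n, pnorm n l x ≤ r → H x < M) {x : E2 n} (hx : M ≤ H x) :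
    r < pnorm n l x :=
  lt_of_not_ge fun h => (hM x h).not_ge hx

theorem radial_field_is_symplectic_dilation_general
    (n : ℕ) (H : E2 n → ℝ) (μ r : ℝ)
    (hH2 : ∀ x : E2 n, r ≤ pnorm n n x →
      0 < μ * H x ∧ μ * H x ≤ ⟪gradient H x, projP n n x⟫)
    (M : ℝ) (hM : ∀ x : E2 n, pnorm n n x ≤ r → H x < M) :
    (∀ x : E2 n, projP n n x ≠ 0 → ∀ u v : E2 n,
      ⟪Jsymp n (fderiv ℝ (fun y => projP n n y) x u), v⟫ +
        ⟪Jsymp n u, fderiv ℝ (fun y => projP n n y) x v⟫ = ⟪Jsymp n u, v⟫) ∧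
    (∀ x : E2 n, H x = M → 0 < ⟪gradient H x, projP n n x⟫) ∧
    ∃ (U : Set (E2 n)) (ξ : E2 n → E2 n), IsOpen U ∧ {x : E2 n | H x = M} ⊆ U ∧
      ContDiffOn ℝ 1 ξ U ∧
      (∀ x ∈ U, ∀ u v : E2 n,
        ⟪Jsymp n (fderiv ℝ ξ x u), v⟫ + ⟪Jsymp n u, fderiv ℝ ξ x v⟫ = ⟪Jsymp n u, v⟫) ∧
      (∀ x : E2 n, H x = M → ⟪gradient H x, ξ x⟫ ≠ 0) := by
  have dilation : ∀ x u v : E2 n, ⟪Jsymp n (fderiv ℝ (projP n n) x u), v⟫ +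
      ⟪Jsymp n u, fderiv ℝ (projP n n) x v⟫ = ⟪Jsymp n u, v⟫ := fun x u v => by
    simpa only [fderiv_projP, coe_projPCLM] using inner_Jsymp_projP_add_inner_Jsymp_projP n u v
  have transverse : ∀ x : E2 n, H x = M → 0 < ⟪gradient H x, projP n n x⟫ := fun x hx =>
    let h := hH2 x (lt_pnorm_of_le_apply hM hx.ge).le
    h.1.trans_le h.2
  refine ⟨fun x _ => dilation x, transverse, {x | r < pnorm n n x}, projP n n,
    isOpen_lt continuous_const (continuous_pnorm n n),
    fun x hx => lt_pnorm_of_le_apply hM hx.ge, contDiff_projP n n |>.contDiffOn,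
    fun x _ => dilation x, fun x hx => (transverse x hx).ne'⟩

/-- Proposition 2.6: for `ℓ = n` and `M > M*`, the vector field `ξ(p,q) = (p,0)` is a
symplectic dilation of `H⁻¹(M)`, which is transverse to it; in particular `H⁻¹(M)` is of
contact type. -/
theorem radial_field_is_symplectic_dilation
    (n : ℕ) (hn : 1 ≤ n) (H : E2 n → ℝ) (μ r : ℝ)
    (hH0 : ContDiff ℝ 2 H)
    (hH1 : ∀ (x : E2 n) (m : Fin n → ℤ), H (x + qVec n n m) = H x)
    (hμ : 0 < μ) (hr : 0 < r)
    (hH2 : ∀ x : E2 n, r ≤ pnorm n n x →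
      0 < μ * H x ∧ μ * H x ≤ ⟪gradient H x, projP n n x⟫)
    (M : ℝ) (hM : ∀ x : E2 n, pnorm n n x ≤ r → H x < M) :
    (∀ x : E2 n, projP n n x ≠ 0 → ∀ u v : E2 n,
      ⟪Jsymp n (fderiv ℝ (fun y => projP n n y) x u), v⟫ +
        ⟪Jsymp n u, fderiv ℝ (fun y => projP n n y) x v⟫ = ⟪Jsymp n u, v⟫) ∧
    (∀ x : E2 n, H x = M → 0 < ⟪gradient H x, projP n n x⟫) ∧
    ∃ (U : Set (E2 n)) (ξ : E2 n → E2 n), IsOpen U ∧ {x : E2 n | H x = M} ⊆ U ∧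
      ContDiffOn ℝ 1 ξ U ∧
      (∀ x ∈ U, ∀ u v : E2 n,
        ⟪Jsymp n (fderiv ℝ ξ x u), v⟫ + ⟪Jsymp n u, fderiv ℝ ξ x v⟫ = ⟪Jsymp n u, v⟫) ∧
      (∀ x : E2 n, H x = M → ⟪gradient H x, ξ x⟫ ≠ 0) :=
  radial_field_is_symplectic_dilation_general n H μ r hH2 M hM
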